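/- arXiv:1110.2806 — 2 statements merged into one kernel-verified Lean document; each statement's English description precedes it below -/
import Mathlib

section
/- Let φ_i(y) = Σ_{n ≥ i} h_{n-i}(f,...,f) y^n/n! where h_{n-i} is the complete homogeneous symmetric function in i copies of a single indeterminate f. Then for all i ≥ 0, ∂φ_{i+1}/∂y − f·φ_{i+1} = φ_i, where φ_0 = 1. -/
/-!
Since `h_j` of `k` equal variables `f` is `C(k+j-1, j) f^j`, the series `φ_i` has exponential
coefficients `n! [y^n] φ_i = C(n-1, n-i) f^(n-i)`. On exponential coefficients `∂/∂y` is the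
shift `n ↦ n + 1`, so the identity reduces to Pascal's rule
`C(n, n-i) = C(n-1, n-i) + C(n-1, n-i-1)`.
-/

open PowerSeries

/-- The complete homogeneous symmetric polynomial of degree `j`
in the `k` variables `x 0, …, x (k-1)`. -/
noncomputable def completeHomog {A : Type*} [CommRing A] (x : ℕ → A) (k j : ℕ) : A :=
  ∑ d ∈ Finset.Nat.antidiagonalTuple k j, ∏ t : Fin k, x t ^ d t

/-- `φ_i(y) = Σ_{n ≥ i} h_{n-i}(f,…,f) y^n / n!`, the specialization of the general
`φ`-series at `x_1 = ⋯ = x_i = f`. -/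
noncomputable def phiF {A : Type*} [CommRing A] [Algebra ℚ A] (f : A) (i : ℕ) :
    PowerSeries A :=
  PowerSeries.mk fun n =>
    if i ≤ n then ((n.factorial : ℚ)⁻¹) • completeHomog (fun _ => f) i (n - i) else 0

theorem Finset.Nat.card_antidiagonalTuple (k n : ℕ) :
    (Finset.Nat.antidiagonalTuple k n).card = (k + n - 1).choose n := by
  rw [← Fintype.card_coe, Fintype.card_congr ((Equiv.subtypeEquivRight
    fun _ => Finset.Nat.mem_antidiagonalTuple).trans (Sym.equivNatSumOfFintype (Fin k) n).symm),
    Sym.card_sym_eq_choose, Fintype.card_fin]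

theorem completeHomog_const {A : Type*} [CommRing A] (f : A) (k j : ℕ) :
    completeHomog (fun _ => f) k j = (k + j - 1).choose j • f ^ j := by
  rw [completeHomog, ← Finset.Nat.card_antidiagonalTuple, ← Finset.sum_const]
  refine Finset.sum_congr rfl fun d hd => ?_
  rw [Finset.prod_pow_eq_pow_sum, Finset.Nat.mem_antidiagonalTuple.mp hd]

theorem PowerSeries.derivative_mk_factorial_inv_smul {A : Type*} [CommSemiring A]
    [Algebra ℚ A] (a : ℕ → A) :
    derivative A (mk fun n => (n.factorial : ℚ)⁻¹ • a n)
      = mk fun n => (n.factorial : ℚ)⁻¹ • a (n + 1) := by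
  ext n
  have hn : (n.factorial : ℚ) ≠ 0 := by positivity
  rw [coeff_derivative, coeff_mk, coeff_mk, ← Nat.cast_add_one, mul_comm, ← nsmul_eq_mul,
    ← Nat.cast_smul_eq_nsmul ℚ, smul_smul, Nat.factorial_succ, Nat.cast_mul]
  congr 1
  field_simp

section PhiEgfCoeff

variable {A : Type*} [CommSemiring A]

/-- At `n = 0` the truncated `n - 1` gives `C(0, 0) = 1`, which is the right value `C(-1, 0)`
for `φ_0 = 1`. -/
def phiEgfCoeff (f : A) (i n : ℕ) : A :=
  if i ≤ n then (n - 1).choose (n - i) • f ^ (n - i) else 0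

theorem phiEgfCoeff_zero (f : A) (n : ℕ) : phiEgfCoeff f 0 n = if n = 0 then 1 else 0 := by
  rcases n with _ | n <;> simp [phiEgfCoeff]

theorem phiEgfCoeff_succ_succ (f : A) (i n : ℕ) :
    phiEgfCoeff f (i + 1) (n + 1) = phiEgfCoeff f i n + f * phiEgfCoeff f (i + 1) n := by
  unfold phiEgfCoeff
  rcases lt_or_ge n i with h | h
  · simp [show ¬ i ≤ n by omega, show ¬ i + 1 ≤ n by omega]
  obtain ⟨m, rfl⟩ := Nat.exists_eq_add_of_le h
  rcases m with _ | m
  · simp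
  · rw [if_pos (by omega), if_pos (by omega), if_pos (by omega),
      show i + (m + 1) + 1 - (i + 1) = m + 1 by omega, show i + (m + 1) - i = m + 1 by omega,
      show i + (m + 1) - (i + 1) = m by omega, show i + (m + 1) - 1 = i + m by omega,
      Nat.add_sub_cancel, ← add_assoc, Nat.choose_succ_succ', add_nsmul, mul_smul_comm,
      ← pow_succ', add_comm]

end PhiEgfCoeff

theorem phiF_eq_mk {A : Type*} [CommRing A] [Algebra ℚ A] (f : A) (i : ℕ) :
    phiF f i = mk fun n => (n.factorial : ℚ)⁻¹ • phiEgfCoeff f i n := by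
  ext n
  rw [phiF, coeff_mk, coeff_mk, phiEgfCoeff]
  split_ifs with h
  · rw [completeHomog_const, Nat.add_sub_cancel' h]
  · rw [smul_zero]

/-- For all `i ≥ 0`:  `∂φ_{i+1}/∂y − f·φ_{i+1} = φ_i`, where `φ_0 = 1`. -/
theorem stmt2 {A : Type*} [CommRing A] [Algebra ℚ A] (f : A) (i : ℕ) :
    (PowerSeries.derivative A (phiF f (i + 1)) - PowerSeries.C f * phiF f (i + 1)
        = phiF f i) ∧ phiF f 0 = 1 := by
  simp only [phiF_eq_mk, derivative_mk_factorial_inv_smul]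
  constructor
  · ext n
    rw [map_sub, coeff_C_mul, coeff_mk, coeff_mk, coeff_mk, phiEgfCoeff_succ_succ, smul_add,
      mul_smul_comm, add_sub_cancel_right]
  · ext n
    rw [coeff_mk, phiEgfCoeff_zero, coeff_one]
    split_ifs with hn
    · simp [hn]
    · rw [smul_zero]
end

section
/- For any integers a ≥ 0, b ≥ 1, c ≥ 2, d ≥ 0, the quantity Σ over the torus contributions gives: the coefficient [x^{a+1}/(a+1)! · y^b/b! · v^{c+d}/(c+d)! · w^d] of (a+1)(1−δ_{b,0})(⟨φ_{1,0}⟩ + 2w⟨φ_{0,1}⟩ + 2w⟨φ_{1,1}⟩ + w^2⟨φ_{0,2}⟩ + w^2⟨φ_{1,2}⟩) + (a+1)(1−δ_{b,0})(b−1)(2w⟨φ_{0,1}⟩ + w^2⟨φ_{0,2}⟩) equals (a+1)(d+1), where [v^n/n!]⟨φ_{i,j}⟩ = [t^{n−i−j}](1−t)^{-i}(1−wt)^{-j}. -/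
/-! With `n = c + d`, the coefficient `[v^n/n!] [w^d]` of `w^k ⟨φ_{i,k}⟩` is
`C(n-d-1, n-d-i)·C(d-1, d-k)`. For `i = 0` this vanishes as soon as `n > d`, so the correction
term contributes nothing; for `i = 1` it is `C(d-1, d-k)`, and the main sum becomes
`[d = 0] + 2·[d ≥ 1] + (d-1)·[d ≥ 2] = d + 1`. -/

open PowerSeries

/-- `⟨φ_{i,j}⟩(v)`: the formal power series in `v` over `ℚ[w]` with
`[v^n/n!]⟨φ_{i,j}⟩ = [t^{n−i−j}] (1−t)^{-i} (1−wt)^{-j}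
  = Σ_{p+q = n−i−j} C(p+i−1,p) C(q+j−1,q) w^q`. -/
noncomputable def phiIJ (i j : ℕ) : PowerSeries (Polynomial ℚ) :=
  PowerSeries.mk fun n =>
    if i + j ≤ n then
      ((n.factorial : ℚ)⁻¹) •
        ∑ pq ∈ Finset.HasAntidiagonal.antidiagonal (n - i - j),
          (((pq.1 + i - 1).choose pq.1 * (pq.2 + j - 1).choose pq.2 : ℕ) : ℚ) •
            (Polynomial.X : Polynomial ℚ) ^ pq.2
    else 0

/-- The indeterminate `w`, viewed as a constant power series. -/
noncomputable def W : PowerSeries (Polynomial ℚ) :=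
  PowerSeries.C (R := Polynomial ℚ) Polynomial.X

open Polynomial Finset in
theorem Polynomial.coeff_sum_antidiagonal_smul_X_pow {R : Type*} [Semiring R] (m d : ℕ)
    (g : ℕ × ℕ → R) :
    (∑ pq ∈ antidiagonal m, g pq • (X : R[X]) ^ pq.2).coeff d
      = if d ≤ m then g (m - d, d) else 0 := by
  simp only [finsetSum_coeff, coeff_smul, coeff_X_pow, smul_eq_mul, mul_ite, mul_one, mul_zero,
    eq_comm (a := d)]
  rw [← sum_filter]
  convert congrArg (∑ x ∈ ·, g x) (HasAntidiagonal.filter_snd_eq_antidiagonal m d)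
  split_ifs <;> simp

theorem coeff_coeff_phiIJ (i j n d : ℕ) :
    (coeff n (phiIJ i j)).coeff d
      = if i + j + d ≤ n then
          (n.factorial : ℚ)⁻¹ *
            ((n - i - j - d + i - 1).choose (n - i - j - d) * (d + j - 1).choose d)
        else 0 := by
  rw [phiIJ, coeff_mk]
  by_cases hij : i + j ≤ n
  · have hd : d ≤ n - i - j ↔ i + j + d ≤ n := by omega
    simp only [if_pos hij, Polynomial.coeff_smul, Polynomial.coeff_sum_antidiagonal_smul_X_pow,
      smul_eq_mul, Nat.cast_mul, hd, mul_ite, mul_zero]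
  · rw [if_neg hij, if_neg (by omega), Polynomial.coeff_zero]

theorem coeff_coeff_W_pow_mul (k n d : ℕ) (f : PowerSeries (Polynomial ℚ)) :
    (coeff n (W ^ k * f)).coeff d = if k ≤ d then (coeff n f).coeff (d - k) else 0 := by
  rw [W, ← map_pow, coeff_C_mul, Polynomial.coeff_X_pow_mul']

theorem coeff_coeff_W_pow_mul_phiIJ_zero_eq_zero (k c d : ℕ) (hc : c ≠ 0) :
    (coeff (c + d) (W ^ k * phiIJ 0 k)).coeff d = 0 := by
  rw [coeff_coeff_W_pow_mul, coeff_coeff_phiIJ]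
  split_ifs with hkd
  · rw [show c + d - 0 - k - (d - k) = c by omega, Nat.choose_eq_zero_of_lt (by omega)]
    simp
  all_goals rfl

theorem factorial_mul_coeff_coeff_W_pow_mul_phiIJ_one (k c d : ℕ) (hc : c ≠ 0) :
    ((c + d).factorial : ℚ) * (coeff (c + d) (W ^ k * phiIJ 1 k)).coeff d
      = if k ≤ d then ((d - 1).choose (d - k) : ℚ) else 0 := by
  rw [coeff_coeff_W_pow_mul, coeff_coeff_phiIJ]
  split_ifs with hkd
  · rw [Nat.add_sub_cancel, Nat.choose_self, show d - k + k - 1 = d - 1 by omega]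
    simp [Nat.factorial_ne_zero]
  all_goals first | omega | simp

theorem factorial_mul_coeff_coeff_torus_sum (c d : ℕ) (hc : c ≠ 0) :
    ((c + d).factorial : ℚ) * (coeff (c + d) (phiIJ 1 0 + 2 • (W * phiIJ 0 1)
        + 2 • (W * phiIJ 1 1) + W ^ 2 * phiIJ 0 2 + W ^ 2 * phiIJ 1 2)).coeff d = d + 1 := by
  have h10 := factorial_mul_coeff_coeff_W_pow_mul_phiIJ_one 0 c d hc
  have h01 := coeff_coeff_W_pow_mul_phiIJ_zero_eq_zero 1 c d hc
  have h11 := factorial_mul_coeff_coeff_W_pow_mul_phiIJ_one 1 c d hc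
  simp only [pow_zero, one_mul, pow_one] at h10 h01 h11
  simp only [map_add, map_nsmul, Polynomial.coeff_add, Polynomial.coeff_smul, mul_add,
    mul_smul_comm, h10, h01, h11, coeff_coeff_W_pow_mul_phiIJ_zero_eq_zero 2 c d hc,
    factorial_mul_coeff_coeff_W_pow_mul_phiIJ_one 2 c d hc, smul_zero, add_zero]
  rcases d with _ | _ | d <;> simp <;> ring

theorem coeff_coeff_torus_correction_eq_zero (c d : ℕ) (hc : c ≠ 0) :
    (coeff (c + d) (2 • (W * phiIJ 0 1) + W ^ 2 * phiIJ 0 2)).coeff d = 0 := by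
  have h01 := coeff_coeff_W_pow_mul_phiIJ_zero_eq_zero 1 c d hc
  rw [pow_one] at h01
  simp only [map_add, map_nsmul, Polynomial.coeff_add, Polynomial.coeff_smul, h01,
    coeff_coeff_W_pow_mul_phiIJ_zero_eq_zero 2 c d hc, smul_zero, add_zero]

/-- For `a ≥ 0`, `b ≥ 1`, `c ≥ 2`, `d ≥ 0`, the coefficient `[v^{c+d}/(c+d)! · w^d]` of
`(a+1)(1−δ_{b,0})(⟨φ_{1,0}⟩ + 2w⟨φ_{0,1}⟩ + 2w⟨φ_{1,1}⟩ + w²⟨φ_{0,2}⟩ + w²⟨φ_{1,2}⟩)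
 + (a+1)(1−δ_{b,0})(b−1)(2w⟨φ_{0,1}⟩ + w²⟨φ_{0,2}⟩)`
equals `(a+1)(d+1)` — the number of `(a,b,c,d)`-dipoles on the torus with
`b ≥ 1`, `c ≥ 2`. -/
theorem stmt16 (a b c d : ℕ) (hb : 1 ≤ b) (hc : 2 ≤ c) :
    Polynomial.coeff
      (((c + d).factorial : ℚ) •
        PowerSeries.coeff (R := Polynomial ℚ) (c + d)
          ((((a : ℚ) + 1) * (1 - if b = 0 then 1 else 0)) •
              (phiIJ 1 0 + 2 • (W * phiIJ 0 1) + 2 • (W * phiIJ 1 1)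
                + W ^ 2 * phiIJ 0 2 + W ^ 2 * phiIJ 1 2)
            + (((a : ℚ) + 1) * (1 - if b = 0 then 1 else 0) * ((b : ℚ) - 1)) •
                (2 • (W * phiIJ 0 1) + W ^ 2 * phiIJ 0 2))) d
      = ((a : ℚ) + 1) * ((d : ℚ) + 1) := by
  have hc₀ : c ≠ 0 := by omega
  have h₁ := factorial_mul_coeff_coeff_torus_sum c d hc₀
  have h₂ := coeff_coeff_torus_correction_eq_zero c d hc₀
  generalize phiIJ 1 0 + 2 • (W * phiIJ 0 1) + 2 • (W * phiIJ 1 1) + W ^ 2 * phiIJ 0 2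
    + W ^ 2 * phiIJ 1 2 = S at h₁ ⊢
  generalize 2 • (W * phiIJ 0 1) + W ^ 2 * phiIJ 0 2 = T at h₂ ⊢
  simp only [if_neg (Nat.one_le_iff_ne_zero.mp hb), map_add, PowerSeries.coeff_smul,
    Polynomial.coeff_smul, Polynomial.coeff_add, smul_eq_mul, h₂]
  rw [← h₁]
  ring
end
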